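/- arXiv:1705.10667 — 3 statements merged into one kernel-verified Lean document; each statement's English description precedes it below -/
import Mathlib

section
/- Let R_f ∈ R^{d × d_f} and R_g ∈ R^{d × d_g} be random matrices whose entries are independent random variables with mean 0 and variance 1 (and entries of R_f independent of entries of R_g). Define T(f,g) = (1/√d) (R_f f) ⊙ (R_g g), where ⊙ is the elementwise product. Then for any fixed vectors f, f' ∈ R^{d_f} and g, g' ∈ R^{d_g}, E[⟨T(f,g), T(f',g')⟩] = ⟨f,f'⟩ · ⟨g,g'⟩. -/
open MeasureTheory ProbabilityTheory

/-- Unbiasedness of the randomized multilinear map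
`T(f,g) = (1/√d)(R_f f) ⊙ (R_g g)`: with mutually independent entries of mean 0
and variance 1, `E⟨T(f,g), T(f',g')⟩ = ⟨f,f'⟩⟨g,g'⟩`. Entries of `R_f` and `R_g`
are indexed jointly by `Fin d × (Fin df ⊕ Fin dg)`. -/
theorem randomized_multilinear_unbiased
    {Ω : Type*} [MeasurableSpace Ω] (μ : Measure Ω) [IsProbabilityMeasure μ]
    (d df dg : ℕ) (hd : 0 < d)
    (R : Fin d × (Fin df ⊕ Fin dg) → Ω → ℝ)
    (hmeas : ∀ e, Measurable (R e))
    (hindep : iIndepFun R μ)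
    (hL2 : ∀ e, MemLp (R e) 2 μ)
    (hmean : ∀ e, ∫ ω, R e ω ∂μ = 0)
    (hvar : ∀ e, ∫ ω, (R e ω) ^ 2 ∂μ = 1)
    (f f' : Fin df → ℝ) (g g' : Fin dg → ℝ) :
    ∫ ω, ∑ i : Fin d,
        ((1 / Real.sqrt d) * (∑ j, R (i, Sum.inl j) ω * f j) *
            (∑ k, R (i, Sum.inr k) ω * g k)) *
        ((1 / Real.sqrt d) * (∑ j, R (i, Sum.inl j) ω * f' j) *
            (∑ k, R (i, Sum.inr k) ω * g' k)) ∂μ =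
      (∑ j, f j * f' j) * (∑ k, g k * g' k) := by
  classical
  have hRint : ∀ e, Integrable (R e) μ := fun e => (hL2 e).integrable (by norm_num)
  have hpairint : ∀ e e', Integrable (fun ω => R e ω * R e' ω) μ := by
    intro e e'
    by_cases h : e = e'
    · subst h; simpa [pow_two] using (hL2 e).integrable_sq
    · exact (hindep.indepFun h).integrable_mul (hRint e) (hRint e')
  have hpair : ∀ e e', ∫ ω, R e ω * R e' ω ∂μ = if e = e' then 1 else 0 := by
    intro e e'
    by_cases h : e = e'
    · subst h; simpa [pow_two] using hvar e
    · rw [if_neg h]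
      calc ∫ ω, R e ω * R e' ω ∂μ = (∫ ω, R e ω ∂μ) * ∫ ω, R e' ω ∂μ :=
            (hindep.indepFun h).integral_mul_eq_mul_integral (hRint e).aestronglyMeasurable (hRint e').aestronglyMeasurable
        _ = 0 := by rw [hmean, zero_mul]
  have hquadindep : ∀ (i : Fin d) (j j' : Fin df) (k k' : Fin dg),
      IndepFun (fun ω => R (i, Sum.inl j) ω * R (i, Sum.inl j') ω)
               (fun ω => R (i, Sum.inr k) ω * R (i, Sum.inr k') ω) μ := by
    intro i j j' k k'
    have := hindep.indepFun_mul_mul hmeas (i, Sum.inl j) (i, Sum.inl j')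
      (i, Sum.inr k) (i, Sum.inr k') (by simp) (by simp) (by simp) (by simp)
    exact this
  have hquadint : ∀ (i : Fin d) (j j' : Fin df) (k k' : Fin dg),
      Integrable (fun ω => (R (i, Sum.inl j) ω * R (i, Sum.inl j') ω) *
        (R (i, Sum.inr k) ω * R (i, Sum.inr k') ω)) μ :=
    fun i j j' k k' => (hquadindep i j j' k k').integrable_mul (hpairint _ _) (hpairint _ _)
  have hquad : ∀ (i : Fin d) (j j' : Fin df) (k k' : Fin dg),
      ∫ ω, (R (i, Sum.inl j) ω * R (i, Sum.inl j') ω) *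
        (R (i, Sum.inr k) ω * R (i, Sum.inr k') ω) ∂μ =
      (if j = j' then (1:ℝ) else 0) * (if k = k' then (1:ℝ) else 0) := by
    intro i j j' k k'
    calc ∫ ω, (R (i, Sum.inl j) ω * R (i, Sum.inl j') ω) *
          (R (i, Sum.inr k) ω * R (i, Sum.inr k') ω) ∂μ
        = (∫ ω, R (i, Sum.inl j) ω * R (i, Sum.inl j') ω ∂μ) *
          ∫ ω, R (i, Sum.inr k) ω * R (i, Sum.inr k') ω ∂μ :=
          (hquadindep i j j' k k').integral_mul_eq_mul_integral (hpairint _ _).aestronglyMeasurable (hpairint _ _).aestronglyMeasurable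
      _ = (if j = j' then (1:ℝ) else 0) * (if k = k' then (1:ℝ) else 0) := by
          rw [hpair, hpair]; congr 1 <;> simp [Prod.ext_iff]
  -- pointwise expansion of each term
  have hc : (1 / Real.sqrt d) * (1 / Real.sqrt d) = 1 / (d : ℝ) := by
    rw [div_mul_div_comm, one_mul, Real.mul_self_sqrt (by positivity)]
  have hptw : ∀ (i : Fin d) (ω : Ω),
      ((1 / Real.sqrt d) * (∑ j, R (i, Sum.inl j) ω * f j) *
          (∑ k, R (i, Sum.inr k) ω * g k)) *
      ((1 / Real.sqrt d) * (∑ j, R (i, Sum.inl j) ω * f' j) *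
          (∑ k, R (i, Sum.inr k) ω * g' k)) =
      ∑ j, ∑ k, ∑ j', ∑ k',
        (1 / (d : ℝ)) * (f j * f' j' * (g k * g' k')) *
        ((R (i, Sum.inl j) ω * R (i, Sum.inl j') ω) *
          (R (i, Sum.inr k) ω * R (i, Sum.inr k') ω)) := by
    intro i ω
    have h1 : (∑ j, R (i, Sum.inl j) ω * f j) * (∑ j', R (i, Sum.inl j') ω * f' j') =
        ∑ j, ∑ j', (f j * f' j') * (R (i, Sum.inl j) ω * R (i, Sum.inl j') ω) := by
      rw [Finset.sum_mul_sum]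
      exact Finset.sum_congr rfl fun j _ => Finset.sum_congr rfl fun j' _ => by ring
    have h2 : (∑ k, R (i, Sum.inr k) ω * g k) * (∑ k', R (i, Sum.inr k') ω * g' k') =
        ∑ k, ∑ k', (g k * g' k') * (R (i, Sum.inr k) ω * R (i, Sum.inr k') ω) := by
      rw [Finset.sum_mul_sum]
      exact Finset.sum_congr rfl fun k _ => Finset.sum_congr rfl fun k' _ => by ring
    calc ((1 / Real.sqrt d) * (∑ j, R (i, Sum.inl j) ω * f j) *
          (∑ k, R (i, Sum.inr k) ω * g k)) *
        ((1 / Real.sqrt d) * (∑ j, R (i, Sum.inl j) ω * f' j) *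
          (∑ k, R (i, Sum.inr k) ω * g' k))
        = ((1 / Real.sqrt d) * (1 / Real.sqrt d)) *
          (((∑ j, R (i, Sum.inl j) ω * f j) * (∑ j', R (i, Sum.inl j') ω * f' j')) *
           ((∑ k, R (i, Sum.inr k) ω * g k) * (∑ k', R (i, Sum.inr k') ω * g' k'))) := by
          ring
      _ = (1 / (d : ℝ)) *
          ((∑ j, ∑ j', (f j * f' j') * (R (i, Sum.inl j) ω * R (i, Sum.inl j') ω)) *
           (∑ k, ∑ k', (g k * g' k') * (R (i, Sum.inr k) ω * R (i, Sum.inr k') ω))) := by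
          rw [hc, h1, h2]
      _ = ∑ j, ∑ k, ∑ j', ∑ k',
            (1 / (d : ℝ)) * (f j * f' j' * (g k * g' k')) *
            ((R (i, Sum.inl j) ω * R (i, Sum.inl j') ω) *
              (R (i, Sum.inr k) ω * R (i, Sum.inr k') ω)) := by
          rw [Finset.sum_mul_sum, Finset.mul_sum]
          refine Finset.sum_congr rfl fun j _ => ?_
          rw [Finset.mul_sum]
          refine Finset.sum_congr rfl fun k _ => ?_
          rw [Finset.sum_mul_sum, Finset.mul_sum]
          refine Finset.sum_congr rfl fun j' _ => ?_
          rw [Finset.mul_sum]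
          exact Finset.sum_congr rfl fun k' _ => by ring
  -- integrability of each term
  have htermint : ∀ i : Fin d, Integrable (fun ω =>
      ((1 / Real.sqrt d) * (∑ j, R (i, Sum.inl j) ω * f j) *
          (∑ k, R (i, Sum.inr k) ω * g k)) *
      ((1 / Real.sqrt d) * (∑ j, R (i, Sum.inl j) ω * f' j) *
          (∑ k, R (i, Sum.inr k) ω * g' k))) μ := by
    intro i
    have : Integrable (fun ω => ∑ j, ∑ k, ∑ j', ∑ k',
        (1 / (d : ℝ)) * (f j * f' j' * (g k * g' k')) *
        ((R (i, Sum.inl j) ω * R (i, Sum.inl j') ω) *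
          (R (i, Sum.inr k) ω * R (i, Sum.inr k') ω))) μ := by
      refine integrable_finset_sum _ fun j _ => integrable_finset_sum _ fun k _ =>
        integrable_finset_sum _ fun j' _ => integrable_finset_sum _ fun k' _ => ?_
      exact (hquadint i j j' k k').const_mul _
    exact this.congr (Filter.Eventually.of_forall fun ω => (hptw i ω).symm)
  -- per-index expectation
  have hkey : ∀ i : Fin d,
      ∫ ω, ((1 / Real.sqrt d) * (∑ j, R (i, Sum.inl j) ω * f j) *
          (∑ k, R (i, Sum.inr k) ω * g k)) *
      ((1 / Real.sqrt d) * (∑ j, R (i, Sum.inl j) ω * f' j) *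
          (∑ k, R (i, Sum.inr k) ω * g' k)) ∂μ =
      (1 / (d : ℝ)) * ((∑ j, f j * f' j) * (∑ k, g k * g' k)) := by
    intro i
    rw [integral_congr_ae (Filter.Eventually.of_forall (hptw i))]
    rw [integral_finset_sum _ fun j _ => integrable_finset_sum _ fun k _ =>
      integrable_finset_sum _ fun j' _ => integrable_finset_sum _ fun k' _ =>
      (hquadint i j j' k k').const_mul _]
    have : ∀ j ∈ Finset.univ, (∫ ω, ∑ k, ∑ j', ∑ k',
        (1 / (d : ℝ)) * (f j * f' j' * (g k * g' k')) *
        ((R (i, Sum.inl j) ω * R (i, Sum.inl j') ω) *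
          (R (i, Sum.inr k) ω * R (i, Sum.inr k') ω)) ∂μ) =
        ∑ k, ∑ j', ∑ k', (1 / (d : ℝ)) * (f j * f' j' * (g k * g' k')) *
          ((if j = j' then (1:ℝ) else 0) * (if k = k' then (1:ℝ) else 0)) := by
      intro j _
      rw [integral_finset_sum _ fun k _ => integrable_finset_sum _ fun j' _ =>
        integrable_finset_sum _ fun k' _ => (hquadint i j j' k k').const_mul _]
      refine Finset.sum_congr rfl fun k _ => ?_
      rw [integral_finset_sum _ fun j' _ => integrable_finset_sum _ fun k' _ =>
        (hquadint i j j' k k').const_mul _]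
      refine Finset.sum_congr rfl fun j' _ => ?_
      rw [integral_finset_sum _ fun k' _ => (hquadint i j j' k k').const_mul _]
      refine Finset.sum_congr rfl fun k' _ => ?_
      rw [integral_const_mul, hquad]
    rw [Finset.sum_congr rfl this]
    simp only [mul_ite, ite_mul, mul_one, mul_zero, one_mul, zero_mul,
      Finset.sum_ite_eq, Finset.mem_univ, if_true]
    rw [Finset.sum_mul_sum, Finset.mul_sum]
    refine Finset.sum_congr rfl fun j _ => ?_
    rw [Finset.mul_sum]
  -- assemble
  rw [integral_finset_sum _ fun i _ => htermint i, Finset.sum_congr rfl fun i _ => hkey i]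
  have hd' : (d : ℝ) ≠ 0 := Nat.cast_ne_zero.mpr hd.ne'
  simp only [Finset.sum_const, Finset.card_univ, Fintype.card_fin, nsmul_eq_mul]
  field_simp
end

section
/- Let G be a classifier, G* any fixed classifier, and P, Q two distributions over labeled examples (f, y). With ε_P(G) = P[G(f) ≠ y] and ε_P(G1,G2) = P[G1(f) ≠ G2(f)], it holds that ε_Q(G) ≤ ε_P(G) + ε_P(G*) + ε_Q(G*) + | ε_P(G, G*) − ε_Q(G, G*) |. -/
open MeasureTheory

/-- Domain adaptation bound: the target risk is bounded by the source risk, the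
joint risk of the ideal hypothesis `G*`, and the discrepancy of disagreement
risks across domains. -/
theorem target_risk_bound
    {F Y : Type*} [MeasurableSpace F] [MeasurableSpace Y]
    (P Q : Measure (F × Y)) [IsProbabilityMeasure P] [IsProbabilityMeasure Q]
    (G Gstar : F → Y) (hG : Measurable G) (hGstar : Measurable Gstar) :
    (Q {p | G p.1 ≠ p.2}).toReal ≤
      (P {p | G p.1 ≠ p.2}).toReal +
      ((P {p | Gstar p.1 ≠ p.2}).toReal + (Q {p | Gstar p.1 ≠ p.2}).toReal) +
      |(P {p | G p.1 ≠ Gstar p.1}).toReal - (Q {p | G p.1 ≠ Gstar p.1}).toReal| := by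
  have hsub1 : {p : F × Y | G p.1 ≠ p.2} ⊆
      {p : F × Y | Gstar p.1 ≠ p.2} ∪ {p : F × Y | G p.1 ≠ Gstar p.1} := by
    intro p hp
    by_cases h : Gstar p.1 = p.2
    · right; simp only [Set.mem_setOf_eq]; intro hc; exact hp (hc.trans h)
    · left; exact h
  have hsub2 : {p : F × Y | G p.1 ≠ Gstar p.1} ⊆
      {p : F × Y | G p.1 ≠ p.2} ∪ {p : F × Y | Gstar p.1 ≠ p.2} := by
    intro p hp
    by_cases h : G p.1 = p.2
    · right; simp only [Set.mem_setOf_eq]; intro hc; exact hp (h.trans hc.symm)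
    · left; exact h
  have h1 : Q {p : F × Y | G p.1 ≠ p.2} ≤
      Q {p : F × Y | Gstar p.1 ≠ p.2} + Q {p : F × Y | G p.1 ≠ Gstar p.1} :=
    (measure_mono hsub1).trans (measure_union_le _ _)
  have h2 : P {p : F × Y | G p.1 ≠ Gstar p.1} ≤
      P {p : F × Y | G p.1 ≠ p.2} + P {p : F × Y | Gstar p.1 ≠ p.2} :=
    (measure_mono hsub2).trans (measure_union_le _ _)
  have fin : ∀ (μ : Measure (F × Y)) [IsProbabilityMeasure μ] (s : Set (F × Y)),
      μ s ≠ ⊤ := fun μ _ s => (measure_lt_top μ s).ne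
  have h1' : (Q {p : F × Y | G p.1 ≠ p.2}).toReal ≤
      (Q {p : F × Y | Gstar p.1 ≠ p.2}).toReal + (Q {p : F × Y | G p.1 ≠ Gstar p.1}).toReal := by
    rw [← ENNReal.toReal_add (fin Q _) (fin Q _)]
    exact ENNReal.toReal_mono (ENNReal.add_ne_top.2 ⟨fin Q _, fin Q _⟩) h1
  have h2' : (P {p : F × Y | G p.1 ≠ Gstar p.1}).toReal ≤
      (P {p : F × Y | G p.1 ≠ p.2}).toReal + (P {p : F × Y | Gstar p.1 ≠ p.2}).toReal := by
    rw [← ENNReal.toReal_add (fin P _) (fin P _)]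
    exact ENNReal.toReal_mono (ENNReal.add_ne_top.2 ⟨fin P _, fin P _⟩) h2
  have habs : (Q {p : F × Y | G p.1 ≠ Gstar p.1}).toReal -
      (P {p : F × Y | G p.1 ≠ Gstar p.1}).toReal ≤
      |(P {p : F × Y | G p.1 ≠ Gstar p.1}).toReal - (Q {p : F × Y | G p.1 ≠ Gstar p.1}).toReal| := by
    rw [abs_sub_comm]
    exact le_abs_self _
  linarith
end

section
/- Let d_f, d_g, d be positive integers and let the entries of R_f ∈ R^{d×d_f}, R_g ∈ R^{d×d_g} be i.i.d. with mean 0, variance 1, and finite fourth moment m_4. For fixed unit vectors f ∈ R^{d_f}, g ∈ R^{d_g}, the variance of Z = ⟨T(f,g), T(f,g)⟩ where T(f,g) = (1/√d)(R_f f) ⊙ (R_g g) is of order O(1/d): specifically Var(Z) ≤ C(m_4)/d for a constant C(m_4) depending only on m_4. Hence Z → ⟨f,f⟩⟨g,g⟩ = 1 in probability as d → ∞. -/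
open MeasureTheory ProbabilityTheory

private lemma integrable_pow_of_mem4 {Ω : Type} [MeasurableSpace Ω] {μ : Measure Ω}
    [IsProbabilityMeasure μ] {f : Ω → ℝ} (hm : Measurable f) (hf : MemLp f 4 μ)
    {a : ℕ} (ha : a ≤ 4) : Integrable (fun ω => f ω ^ a) μ := by
  have h4 : Integrable (fun ω => f ω ^ 4) μ := by
    have h := hf.integrable_norm_rpow (by norm_num) (by norm_num)
    refine h.congr ?_
    filter_upwards with ω
    show ‖f ω‖ ^ (ENNReal.toReal 4) = f ω ^ 4
    rw [show (ENNReal.toReal 4) = ((4:ℕ):ℝ) by norm_num, Real.rpow_natCast,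
      Real.norm_eq_abs]
    exact Even.pow_abs (by decide) _
  refine Integrable.mono' ((integrable_const 1).add h4)
    ((hm.pow_const a).aestronglyMeasurable) ?_
  filter_upwards with ω
  have hnn : (0:ℝ) ≤ f ω ^ 4 := by positivity
  rcases le_or_gt |f ω| 1 with h | h
  · have : |f ω ^ a| ≤ 1 := by
      rw [abs_pow]; exact pow_le_one₀ (abs_nonneg _) h
    simpa using this.trans (by linarith)
  · have : |f ω ^ a| ≤ |f ω| ^ 4 := by
      rw [abs_pow]; exact pow_le_pow_right₀ h.le ha
    rw [Even.pow_abs (by decide)] at this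
    simpa using this.trans (by linarith)

private lemma indep_comp {Ω ι : Type} [MeasurableSpace Ω] {μ : Measure Ω}
    {X : ι → Ω → ℝ} (hmeas : ∀ j, Measurable (X j))
    (hindep : iIndepFun X μ)
    (S T : Finset ι) (hST : Disjoint S T)
    {F : (S → ℝ) → ℝ} {G : (T → ℝ) → ℝ} (hF : Measurable F) (hG : Measurable G) :
    IndepFun (fun ω => F fun j => X j ω) (fun ω => G fun j => X j ω) μ :=
  (hindep.indepFun_finset S T hST hmeas).comp hF hG

private lemma moments {Ω : Type} [MeasurableSpace Ω] (μ : Measure Ω) [IsProbabilityMeasure μ]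
    {ι : Type} [DecidableEq ι] (X : ι → Ω → ℝ) (hmeas : ∀ j, Measurable (X j))
    (hindep : iIndepFun X μ)
    (h4 : ∀ j, MemLp (X j) 4 μ) (h1 : ∀ j, ∫ ω, X j ω ∂μ = 0)
    (h2 : ∀ j, ∫ ω, (X j ω) ^ 2 ∂μ = 1) (m4 : ℝ) (hm4 : ∀ j, ∫ ω, (X j ω) ^ 4 ∂μ = m4)
    (c : ι → ℝ) (s : Finset ι) :
    MemLp (fun ω => ∑ j ∈ s, X j ω * c j) 4 μ ∧
    (∫ ω, (∑ j ∈ s, X j ω * c j) ∂μ = 0) ∧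
    (∫ ω, (∑ j ∈ s, X j ω * c j) ^ 2 ∂μ = ∑ j ∈ s, (c j) ^ 2) ∧
    (∫ ω, (∑ j ∈ s, X j ω * c j) ^ 4 ∂μ ≤ (|m4| + 3) * (∑ j ∈ s, (c j) ^ 2) ^ 2) := by
  induction s using Finset.induction_on with
  | empty =>
      refine ⟨by simpa using memLp_const (0:ℝ), by simp, by simp, by simp⟩
  | @insert j₀ s hj₀ IH =>
      obtain ⟨ih4, ih1, ih2, ih4b⟩ := IH
      set S : Ω → ℝ := fun ω => ∑ j ∈ s, X j ω * c j with hSdef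
      set x : Ω → ℝ := X j₀ with hxdef
      have hSm : Measurable S := Finset.measurable_sum s fun j _ => (hmeas j).mul_const _
      have hxm : Measurable x := hmeas j₀
      have hx4 : MemLp x 4 μ := h4 j₀
      have hI : IndepFun S x μ := by
        have hF : Measurable (fun v : ((↥s) → ℝ) => ∑ j : ↥s, v j * c j) :=
          Finset.measurable_sum Finset.univ fun j _ => (measurable_pi_apply j).mul_const _
        have hG : Measurable (fun v : (({j₀} : Finset ι) → ℝ) =>
            v ⟨j₀, Finset.mem_singleton_self j₀⟩) := measurable_pi_apply _
        have h := indep_comp hmeas hindep s {j₀}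
          (by simpa [Finset.disjoint_singleton_right] using hj₀) hF hG
        have e1 : S = fun ω => ∑ j : ↥s, X (↑j) ω * c ↑j := by
          funext ω; rw [hSdef]; exact (Finset.sum_coe_sort s fun j => X j ω * c j).symm
        rw [e1]; exact h
      have hxS : ∀ p q : ℕ, ∫ ω, x ω ^ p * S ω ^ q ∂μ
          = (∫ ω, x ω ^ p ∂μ) * ∫ ω, S ω ^ q ∂μ := by
        intro p q
        have := (hI.symm.comp (measurable_id.pow_const p)
          (measurable_id.pow_const q)).integral_mul_eq_mul_integral
          ((hxm.pow_const p).aestronglyMeasurable) ((hSm.pow_const q).aestronglyMeasurable)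
        simpa using this
      have hint : ∀ p q : ℕ, p ≤ 4 → q ≤ 4 →
          Integrable (fun ω => x ω ^ p * S ω ^ q) μ := by
        intro p q hp hq
        have := (hI.symm.comp (measurable_id.pow_const p)
          (measurable_id.pow_const q)).integrable_mul
          (integrable_pow_of_mem4 hxm hx4 hp) (integrable_pow_of_mem4 hSm ih4 hq)
        exact this
      have hx0 : ∫ ω, x ω ^ 0 ∂μ = 1 := by simp
      have hx1 : ∫ ω, x ω ^ 1 ∂μ = 0 := by simpa using h1 j₀
      have hx2 : ∫ ω, x ω ^ 2 ∂μ = 1 := h2 j₀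
      have hx4' : ∫ ω, x ω ^ 4 ∂μ = m4 := hm4 j₀
      have hS0 : ∫ ω, S ω ^ 0 ∂μ = 1 := by simp
      have hS1 : ∫ ω, S ω ^ 1 ∂μ = 0 := by simpa using ih1
      have hS2 : ∫ ω, S ω ^ 2 ∂μ = ∑ j ∈ s, (c j) ^ 2 := ih2
      have ht : 0 ≤ ∑ j ∈ s, (c j) ^ 2 := Finset.sum_nonneg fun j _ => sq_nonneg _
      refine ⟨?_, ?_, ?_, ?_⟩
      · have e0 : (fun ω => ∑ j ∈ insert j₀ s, X j ω * c j)
            = fun ω => c j₀ * x ω + S ω := by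
          funext ω; rw [Finset.sum_insert hj₀, hSdef, hxdef]; ring
        rw [e0]; exact (hx4.const_mul _).add ih4
      · have e1 : (fun ω => ∑ j ∈ insert j₀ s, X j ω * c j)
            = fun ω => c j₀ * (x ω ^ 1 * S ω ^ 0) + x ω ^ 0 * S ω ^ 1 := by
          funext ω; rw [Finset.sum_insert hj₀, hSdef, hxdef]; ring
        rw [e1, integral_add ((hint 1 0 (by norm_num) (by norm_num)).const_mul _)
            (hint 0 1 (by norm_num) (by norm_num)), integral_const_mul,
          hxS 1 0, hxS 0 1, hx0, hx1, hS0, hS1]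
        ring
      · have e2 : (fun ω => (∑ j ∈ insert j₀ s, X j ω * c j) ^ 2)
            = fun ω => c j₀ ^ 2 * (x ω ^ 2 * S ω ^ 0) + ((2 * c j₀) * (x ω ^ 1 * S ω ^ 1)
                + x ω ^ 0 * S ω ^ 2) := by
          funext ω; rw [Finset.sum_insert hj₀, hSdef, hxdef]; ring
        have j11 := (hint 1 1 (by norm_num) (by norm_num)).const_mul (2 * c j₀)
        have j02 := hint 0 2 (by norm_num) (by norm_num)
        have jr : Integrable (fun ω => (2 * c j₀) * (x ω ^ 1 * S ω ^ 1)
            + x ω ^ 0 * S ω ^ 2) μ := j11.add j02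
        rw [e2, integral_add ((hint 2 0 (by norm_num) (by norm_num)).const_mul _) jr,
          integral_add j11 j02,
          integral_const_mul, integral_const_mul,
          hxS 2 0, hxS 1 1, hxS 0 2, hx0, hx1, hx2, hS0, hS1, hS2,
          Finset.sum_insert hj₀]
        ring
      · have e4 : (fun ω => (∑ j ∈ insert j₀ s, X j ω * c j) ^ 4)
            = fun ω => c j₀ ^ 4 * (x ω ^ 4 * S ω ^ 0) + ((4 * c j₀ ^ 3) * (x ω ^ 3 * S ω ^ 1)
                + ((6 * c j₀ ^ 2) * (x ω ^ 2 * S ω ^ 2) + ((4 * c j₀) * (x ω ^ 1 * S ω ^ 3)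
                + x ω ^ 0 * S ω ^ 4))) := by
          funext ω; rw [Finset.sum_insert hj₀, hSdef, hxdef]; ring
        have i40 := (hint 4 0 (by norm_num) (by norm_num)).const_mul (c j₀ ^ 4)
        have i31 := (hint 3 1 (by norm_num) (by norm_num)).const_mul (4 * c j₀ ^ 3)
        have i22 := (hint 2 2 (by norm_num) (by norm_num)).const_mul (6 * c j₀ ^ 2)
        have i13 := (hint 1 3 (by norm_num) (by norm_num)).const_mul (4 * c j₀)
        have i04 := hint 0 4 (by norm_num) (by norm_num)
        have i134 : Integrable (fun ω => (4 * c j₀) * (x ω ^ 1 * S ω ^ 3)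
            + x ω ^ 0 * S ω ^ 4) μ := i13.add i04
        have i2234 : Integrable (fun ω => (6 * c j₀ ^ 2) * (x ω ^ 2 * S ω ^ 2)
            + ((4 * c j₀) * (x ω ^ 1 * S ω ^ 3) + x ω ^ 0 * S ω ^ 4)) μ := i22.add i134
        have irest : Integrable (fun ω => (4 * c j₀ ^ 3) * (x ω ^ 3 * S ω ^ 1)
            + ((6 * c j₀ ^ 2) * (x ω ^ 2 * S ω ^ 2) + ((4 * c j₀) * (x ω ^ 1 * S ω ^ 3)
            + x ω ^ 0 * S ω ^ 4))) μ := i31.add i2234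
        rw [e4, integral_add i40 irest,
          integral_add i31 i2234,
          integral_add i22 i134, integral_add i13 i04,
          integral_const_mul, integral_const_mul, integral_const_mul, integral_const_mul,
          hxS 4 0, hxS 3 1, hxS 2 2, hxS 1 3, hxS 0 4,
          hx0, hx1, hx2, hx4', hS0, hS1, hS2, Finset.sum_insert hj₀]
        have hK3 : (3:ℝ) ≤ |m4| + 3 := by linarith [abs_nonneg m4]
        have hKm : m4 ≤ |m4| + 3 := by
          have := le_abs_self m4; linarith
        nlinarith [ih4b, ht, sq_nonneg (c j₀), sq_nonneg (c j₀ ^ 2),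
          mul_nonneg (sq_nonneg (c j₀)) ht, abs_nonneg m4,
          mul_le_mul_of_nonneg_left hKm (pow_nonneg (abs_nonneg (c j₀)) 4)]

set_option maxHeartbeats 2000000 in
/-- Variance bound for the randomized multilinear approximation: for i.i.d.
entries with mean 0, variance 1 and fourth moment `m₄`, and unit vectors `f, g`,
the squared norm `Z = ⟨T(f,g), T(f,g)⟩` has variance `O(1/d)`, namely
`Var(Z) ≤ C(m₄)/d` for a constant depending only on `m₄`; by Chebyshev, `Z`
concentrates around `⟨f,f⟩⟨g,g⟩ = 1` in probability as `d → ∞`. -/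
theorem randomized_multilinear_variance_bound :
    ∃ C : ℝ → ℝ,
      ∀ {Ω : Type} [MeasurableSpace Ω] (μ : Measure Ω) [IsProbabilityMeasure μ]
        (d df dg : ℕ), 0 < d →
        ∀ (R : Fin d × (Fin df ⊕ Fin dg) → Ω → ℝ),
        (∀ e, Measurable (R e)) →
        iIndepFun R μ →
        (∀ e e', μ.map (R e) = μ.map (R e')) →
        (∀ e, MemLp (R e) 4 μ) →
        (∀ e, ∫ ω, R e ω ∂μ = 0) →
        (∀ e, ∫ ω, (R e ω) ^ 2 ∂μ = 1) →
        ∀ (m4 : ℝ), (∀ e, ∫ ω, (R e ω) ^ 4 ∂μ = m4) →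
        ∀ (f : Fin df → ℝ) (g : Fin dg → ℝ),
        (∑ j, (f j) ^ 2 = 1) → (∑ k, (g k) ^ 2 = 1) →
        variance (fun ω => ∑ i : Fin d,
            ((1 / Real.sqrt d) * (∑ j, R (i, Sum.inl j) ω * f j) *
              (∑ k, R (i, Sum.inr k) ω * g k)) ^ 2) μ ≤ C m4 / d ∧
        ∀ ε : ℝ, 0 < ε →
          (μ {ω | ε ≤ |(∑ i : Fin d,
              ((1 / Real.sqrt d) * (∑ j, R (i, Sum.inl j) ω * f j) *
                (∑ k, R (i, Sum.inr k) ω * g k)) ^ 2) - 1|}).toReal ≤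
            C m4 / (d * ε ^ 2) := by
  classical
  refine ⟨fun x => (|x| + 3) ^ 2, ?_⟩
  intro Ω _inst μ _inst2 d df dg hd R hmeas hindep _hident h4 hm1 hm2 m4 hm4 f g hf hg
  have hdR : (0:ℝ) < d := by exact_mod_cast hd
  have hd0 : (d:ℝ) ≠ 0 := ne_of_gt hdR
  set A : Fin d → Ω → ℝ := fun i ω => ∑ j, R (i, Sum.inl j) ω * f j with hAdef
  set B : Fin d → Ω → ℝ := fun i ω => ∑ k, R (i, Sum.inr k) ω * g k with hBdef
  set W : Fin d → Ω → ℝ := fun i ω => ((1 / Real.sqrt d) * A i ω * B i ω) ^ 2 with hWdef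
  set c : Fin d × (Fin df ⊕ Fin dg) → ℝ := fun e => Sum.elim f g e.2 with hcdef
  set Si : Fin d → Finset (Fin d × (Fin df ⊕ Fin dg)) :=
    fun i => Finset.univ.image (fun j => (i, Sum.inl j)) with hSidef
  set Ti : Fin d → Finset (Fin d × (Fin df ⊕ Fin dg)) :=
    fun i => Finset.univ.image (fun k => (i, Sum.inr k)) with hTidef
  have hAm : ∀ i, Measurable (A i) :=
    fun i => Finset.measurable_sum _ fun j _ => (hmeas _).mul_const _
  have hBm : ∀ i, Measurable (B i) :=
    fun i => Finset.measurable_sum _ fun k _ => (hmeas _).mul_const _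
  -- pointwise identities between image-sums and A, B
  have eA' : ∀ (i : Fin d) (ω : Ω), (∑ e ∈ Si i, R e ω * c e) = A i ω := by
    intro i ω
    rw [hSidef, Finset.sum_image (by intro a _ b _ h; simpa using h)]
    simp [hcdef, hAdef]
  have eB' : ∀ (i : Fin d) (ω : Ω), (∑ e ∈ Ti i, R e ω * c e) = B i ω := by
    intro i ω
    rw [hTidef, Finset.sum_image (by intro a _ b _ h; simpa using h)]
    simp [hcdef, hBdef]
  have ecsA : ∀ i : Fin d, (∑ e ∈ Si i, (c e) ^ 2) = 1 := by
    intro i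
    rw [hSidef, Finset.sum_image (by intro a _ b _ h; simpa using h)]
    simpa [hcdef] using hf
  have ecsB : ∀ i : Fin d, (∑ e ∈ Ti i, (c e) ^ 2) = 1 := by
    intro i
    rw [hTidef, Finset.sum_image (by intro a _ b _ h; simpa using h)]
    simpa [hcdef] using hg
  -- moments of A and B
  have hAfacts : ∀ i : Fin d, MemLp (A i) 4 μ ∧ (∫ ω, (A i ω) ^ 2 ∂μ = 1) ∧
      (∫ ω, (A i ω) ^ 4 ∂μ ≤ |m4| + 3) := by
    intro i
    obtain ⟨w1, _, w2, w3⟩ := moments μ R hmeas hindep h4 hm1 hm2 m4 hm4 c (Si i)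
    simp only [eA'] at w1 w2 w3
    rw [ecsA i] at w2 w3
    exact ⟨w1, w2, by simpa using w3⟩
  have hBfacts : ∀ i : Fin d, MemLp (B i) 4 μ ∧ (∫ ω, (B i ω) ^ 2 ∂μ = 1) ∧
      (∫ ω, (B i ω) ^ 4 ∂μ ≤ |m4| + 3) := by
    intro i
    obtain ⟨w1, _, w2, w3⟩ := moments μ R hmeas hindep h4 hm1 hm2 m4 hm4 c (Ti i)
    simp only [eB'] at w1 w2 w3
    rw [ecsB i] at w2 w3
    exact ⟨w1, w2, by simpa using w3⟩
  have hA4nn : ∀ i, 0 ≤ ∫ ω, (A i ω) ^ 4 ∂μ :=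
    fun i => integral_nonneg fun ω => by positivity
  have hB4nn : ∀ i, 0 ≤ ∫ ω, (B i ω) ^ 4 ∂μ :=
    fun i => integral_nonneg fun ω => by positivity
  -- independence of A i and B i
  have hIAB : ∀ i, IndepFun (A i) (B i) μ := by
    intro i
    have hdisj : Disjoint (Si i) (Ti i) := by
      rw [Finset.disjoint_left]
      rintro e he1 he2
      rw [hSidef] at he1; rw [hTidef] at he2
      simp only [Finset.mem_image, Finset.mem_univ, true_and] at he1 he2
      obtain ⟨j, rfl⟩ := he1
      obtain ⟨k, hk⟩ := he2
      simpa using hk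
    have hFm : Measurable (fun v : (↥(Si i) → ℝ) => ∑ e : ↥(Si i), v e * c ↑e) :=
      Finset.measurable_sum _ fun e _ => (measurable_pi_apply e).mul_const _
    have hGm : Measurable (fun v : (↥(Ti i) → ℝ) => ∑ e : ↥(Ti i), v e * c ↑e) :=
      Finset.measurable_sum _ fun e _ => (measurable_pi_apply e).mul_const _
    have h := indep_comp hmeas hindep (Si i) (Ti i) hdisj hFm hGm
    have e1 : (fun ω => ∑ e : ↥(Si i), R (↑e) ω * c ↑e) = A i := by
      funext ω
      exact (Finset.sum_coe_sort (Si i) (fun e => R e ω * c e)).trans (eA' i ω)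
    have e2 : (fun ω => ∑ e : ↥(Ti i), R (↑e) ω * c ↑e) = B i := by
      funext ω
      exact (Finset.sum_coe_sort (Ti i) (fun e => R e ω * c e)).trans (eB' i ω)
    rw [e1, e2] at h
    exact h
  have hABprod : ∀ (i : Fin d) (p q : ℕ), p ≤ 4 → q ≤ 4 →
      Integrable (fun ω => (A i ω) ^ p * (B i ω) ^ q) μ ∧
      ∫ ω, (A i ω) ^ p * (B i ω) ^ q ∂μ
        = (∫ ω, (A i ω) ^ p ∂μ) * ∫ ω, (B i ω) ^ q ∂μ := by
    intro i p q hp hq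
    have hI := (hIAB i).comp (measurable_id.pow_const p) (measurable_id.pow_const q)
    constructor
    · have := hI.integrable_mul (integrable_pow_of_mem4 (hAm i) (hAfacts i).1 hp)
        (integrable_pow_of_mem4 (hBm i) (hBfacts i).1 hq)
      exact this
    · have := hI.integral_mul_eq_mul_integral (((hAm i).pow_const p).aestronglyMeasurable)
        (((hBm i).pow_const q).aestronglyMeasurable)
      simpa using this
  -- pointwise description of W and W^2
  have hsq : Real.sqrt d ^ 2 = (d:ℝ) := Real.sq_sqrt hdR.le
  have hWeq : ∀ (i : Fin d), (fun ω => W i ω)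
      = fun ω => (1/(d:ℝ)) * ((A i ω) ^ 2 * (B i ω) ^ 2) := by
    intro i; funext ω
    have h' : (1 / Real.sqrt d) ^ 2 = 1 / (d:ℝ) := by rw [div_pow, one_pow, hsq]
    show ((1 / Real.sqrt d) * A i ω * B i ω) ^ 2 = _
    calc ((1 / Real.sqrt d) * A i ω * B i ω) ^ 2
        = (1 / Real.sqrt d) ^ 2 * ((A i ω) ^ 2 * (B i ω) ^ 2) := by ring
      _ = (1/(d:ℝ)) * ((A i ω) ^ 2 * (B i ω) ^ 2) := by rw [h']
  have hW2eq : ∀ (i : Fin d), (fun ω => (W i ω) ^ 2)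
      = fun ω => (1/(d:ℝ)^2) * ((A i ω) ^ 4 * (B i ω) ^ 4) := by
    intro i; funext ω
    have h' : (1 / Real.sqrt d) ^ 2 = 1 / (d:ℝ) := by rw [div_pow, one_pow, hsq]
    show (((1 / Real.sqrt d) * A i ω * B i ω) ^ 2) ^ 2 = _
    calc (((1 / Real.sqrt d) * A i ω * B i ω) ^ 2) ^ 2
        = ((1 / Real.sqrt d) ^ 2) ^ 2 * ((A i ω) ^ 4 * (B i ω) ^ 4) := by ring
      _ = (1/(d:ℝ)^2) * ((A i ω) ^ 4 * (B i ω) ^ 4) := by rw [h']; ring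
  have hWmeas : ∀ i, Measurable (W i) :=
    fun i => ((measurable_const.mul (hAm i)).mul (hBm i)).pow_const 2
  have hWmean : ∀ i, ∫ ω, W i ω ∂μ = 1/(d:ℝ) := by
    intro i
    rw [show (fun ω => W i ω) = _ from hWeq i, integral_const_mul,
      (hABprod i 2 2 (by norm_num) (by norm_num)).2, (hAfacts i).2.1, (hBfacts i).2.1]
    ring
  have hWsqint : ∀ i, Integrable (fun ω => (W i ω) ^ 2) μ := by
    intro i
    rw [hW2eq i]
    exact ((hABprod i 4 4 le_rfl le_rfl).1).const_mul _
  have hWsqbound : ∀ i, ∫ ω, (W i ω) ^ 2 ∂μ ≤ (|m4| + 3) ^ 2 / (d:ℝ) ^ 2 := by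
    intro i
    rw [hW2eq i, integral_const_mul, (hABprod i 4 4 le_rfl le_rfl).2]
    have h1 := (hAfacts i).2.2
    have h2 := (hBfacts i).2.2
    have h3 := hA4nn i
    have h4' := hB4nn i
    have hKnn : (0:ℝ) ≤ |m4| + 3 := by positivity
    calc (1/(d:ℝ)^2) * ((∫ ω, (A i ω) ^ 4 ∂μ) * ∫ ω, (B i ω) ^ 4 ∂μ)
        ≤ (1/(d:ℝ)^2) * ((|m4| + 3) * (|m4| + 3)) := by
          refine mul_le_mul_of_nonneg_left ?_ (by positivity)
          exact mul_le_mul h1 h2 h4' hKnn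
      _ = (|m4| + 3) ^ 2 / (d:ℝ) ^ 2 := by ring
  have hW2 : ∀ i, MemLp (W i) 2 μ := by
    intro i
    exact (memLp_two_iff_integrable_sq (hWmeas i).aestronglyMeasurable).mpr (hWsqint i)
  have hVarW : ∀ i, variance (W i) μ ≤ (|m4| + 3) ^ 2 / (d:ℝ) ^ 2 := by
    intro i
    rw [variance_eq_sub (hW2 i)]
    have e : ∫ ω, (W i ^ 2) ω ∂μ = ∫ ω, (W i ω) ^ 2 ∂μ := rfl
    have hb := hWsqbound i
    have := sq_nonneg (∫ ω, W i ω ∂μ)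
    calc ∫ ω, (W i ^ 2) ω ∂μ - (∫ ω, W i ω ∂μ) ^ 2
        ≤ ∫ ω, (W i ^ 2) ω ∂μ := by linarith
      _ = ∫ ω, (W i ω) ^ 2 ∂μ := e
      _ ≤ _ := hb
  -- pairwise independence of the W i
  have hpair : ∀ i i' : Fin d, i ≠ i' → IndepFun (W i) (W i') μ := by
    intro i i' hii
    have hdisj : Disjoint ({i} ×ˢ (Finset.univ : Finset (Fin df ⊕ Fin dg)))
        ({i'} ×ˢ (Finset.univ : Finset (Fin df ⊕ Fin dg))) := by
      rw [Finset.disjoint_left]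
      rintro ⟨a1, a2⟩ h1 h2
      simp only [Finset.mem_product, Finset.mem_singleton] at h1 h2
      exact absurd (h1.1.symm.trans h2.1) hii
    have hψ : ∀ i₀ : Fin d, Measurable (fun v :
        (↥(({i₀} : Finset (Fin d)) ×ˢ (Finset.univ : Finset (Fin df ⊕ Fin dg))) → ℝ) =>
        ((1 / Real.sqrt d) *
          (∑ j, v ⟨(i₀, Sum.inl j), by simp⟩ * f j) *
          (∑ k, v ⟨(i₀, Sum.inr k), by simp⟩ * g k)) ^ 2) := by
      intro i₀
      refine Measurable.pow_const (Measurable.mul (Measurable.mul measurable_const ?_) ?_) 2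
      · exact Finset.measurable_sum _ fun j _ => (measurable_pi_apply _).mul_const _
      · exact Finset.measurable_sum _ fun k _ => (measurable_pi_apply _).mul_const _
    exact (hindep.indepFun_finset _ _ hdisj hmeas).comp (hψ i) (hψ i')
  -- variance of the sum
  have hZfun : (fun ω => ∑ i : Fin d, W i ω) = ∑ i : Fin d, W i := by
    funext ω; rw [Finset.sum_apply]
  have hvar : variance (fun ω => ∑ i : Fin d, W i ω) μ ≤ (|m4| + 3) ^ 2 / (d:ℝ) := by
    rw [hZfun, IndepFun.variance_sum (fun i _ => hW2 i)
      (fun i _ j _ hij => hpair i j hij)]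
    calc ∑ i : Fin d, variance (W i) μ
        ≤ ∑ _i : Fin d, (|m4| + 3) ^ 2 / (d:ℝ) ^ 2 :=
          Finset.sum_le_sum fun i _ => hVarW i
      _ = (d:ℝ) * ((|m4| + 3) ^ 2 / (d:ℝ) ^ 2) := by
          rw [Finset.sum_const, Finset.card_univ, Fintype.card_fin, nsmul_eq_mul]
      _ = (|m4| + 3) ^ 2 / (d:ℝ) := by field_simp
  have hWint : ∀ i, Integrable (W i) μ := fun i => (hW2 i).integrable one_le_two
  have hmean : ∫ ω, (∑ i : Fin d, W i ω) ∂μ = 1 := by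
    rw [integral_finset_sum _ fun i _ => hWint i]
    simp only [hWmean]
    rw [Finset.sum_const, Finset.card_univ, Fintype.card_fin, nsmul_eq_mul]
    field_simp
  constructor
  · exact hvar
  · intro ε hε
    have hZ2 : MemLp (fun ω => ∑ i : Fin d, W i ω) 2 μ := by
      rw [hZfun]; exact memLp_finset_sum' _ fun i _ => hW2 i
    have hch := meas_ge_le_variance_div_sq hZ2 hε
    simp only [hmean] at hch
    have ht1 : (μ {ω | ε ≤ |(∑ i : Fin d, W i ω) - 1|}).toReal
        ≤ variance (fun ω => ∑ i : Fin d, W i ω) μ / ε ^ 2 := by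
      have := ENNReal.toReal_mono ENNReal.ofReal_ne_top hch
      rwa [ENNReal.toReal_ofReal (div_nonneg (variance_nonneg _ _) (by positivity))] at this
    have ht2 : variance (fun ω => ∑ i : Fin d, W i ω) μ / ε ^ 2
        ≤ (|m4| + 3) ^ 2 / ((d:ℝ) * ε ^ 2) := by
      rw [show (|m4| + 3) ^ 2 / ((d:ℝ) * ε ^ 2) = ((|m4| + 3) ^ 2 / (d:ℝ)) / ε ^ 2 from
        by rw [div_div]]
      gcongr
    exact ht1.trans ht2
end
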